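/- arXiv:2602.06096 — 7 statements merged into one kernel-verified Lean document; each statement's English description precedes it below -/
import Mathlib

section
/- Let G and H be finite groups and m a positive integer. Then D_m(G × H) = D_m(G) × D_m(H), where D_m(K) = {x ∈ L_m(K) : for all y ∈ L_m(K), o(xy) divides m}. -/
/-! Both the `m`-th power condition and `orderOf (x * y) ∣ m` split coordinatewise (the order of a
pair is the `lcm` of the orders), and testing `x` against the partners `(a, 1)` and `(1, b)`
separates the two coordinates. -/

/-- The set `D_m(K)`. -/
def setD (K : Type*) [Group K] (m : ℕ) : Set K :=
  {x | x ^ m = 1 ∧ ∀ y : K, y ^ m = 1 → orderOf (x * y) ∣ m}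

theorem stmt1_general (G H : Type*) [Group G] [Group H]
    (m : ℕ) :
    setD (G × H) m = (setD G m) ×ˢ (setD H m) := by
  ext ⟨g, h⟩
  simp only [setD, Set.mem_ofPred_eq, Set.mem_prod, Prod.forall, Prod.mk_mul_mk, Prod.pow_mk,
    Prod.mk_eq_one, Prod.orderOf_mk, Nat.lcm_dvd_iff]
  constructor
  · rintro ⟨⟨hg, hh⟩, hpair⟩
    exact ⟨⟨hg, fun a ha => (hpair a 1 ⟨ha, one_pow m⟩).1⟩,
      ⟨hh, fun b hb => (hpair 1 b ⟨one_pow m, hb⟩).2⟩⟩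
  · rintro ⟨⟨hg, hG⟩, hh, hH⟩
    exact ⟨⟨hg, hh⟩, fun a b ⟨ha, hb⟩ => ⟨hG a ha, hH b hb⟩⟩

/-- `D_m(G × H) = D_m(G) × D_m(H)` for finite groups `G`, `H`. -/
theorem stmt1 (G H : Type*) [Group G] [Group H] [Finite G] [Finite H]
    (m : ℕ) (hm : 0 < m) :
    setD (G × H) m = (setD G m) ×ˢ (setD H m) :=
  stmt1_general G H m
end

section
/- Let G and H be finite groups and m, n coprime positive integers. Then D_{m,n}(G × H) ⊆ D_{m,n}(G) × D_{m,n}(H). -/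
/-- `D_{m,n}(K) = {x ∈ K : x^m = 1 ∧ ∀ u ≠ 1 with u^n = 1, o(xu) ∣ n}`. -/
def setDD (K : Type*) [Group K] (m n : ℕ) : Set K :=
  {x | x ^ m = 1 ∧ ∀ u : K, u ^ n = 1 → u ≠ 1 → orderOf (x * u) ∣ n}

/- A retraction `p` with section `s` carries `D_{m,n}(L)` into `D_{m,n}(K)`: test `p x` against
`u` by testing `x` against `s u`, since `p (x * s u) = p x * u` and homomorphisms do not
increase orders. -/
theorem mapsTo_setDD_of_leftInverse {K L : Type*} [Group K] [Group L] (p : L →* K)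
    (s : K →* L) (hps : Function.LeftInverse p s) (m n : ℕ) :
    Set.MapsTo p (setDD L m n) (setDD K m n) := by
  rintro x ⟨hxm, hx⟩
  refine ⟨by rw [← map_pow, hxm, map_one], fun u hun hu => ?_⟩
  have hsu : s u ≠ 1 := fun h => hu (by rw [← hps u, h, map_one])
  have hpx : p (x * s u) = p x * u := by rw [map_mul, hps u]
  exact hpx ▸ (orderOf_map_dvd p _).trans (hx (s u) (by rw [← map_pow, hun, map_one]) hsu)

theorem stmt2_general (G H : Type*) [Group G] [Group H]
    (m n : ℕ) :
    setDD (G × H) m n ⊆ (setDD G m n) ×ˢ (setDD H m n) :=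
  fun _ hx =>
    ⟨mapsTo_setDD_of_leftInverse (MonoidHom.fst G H) (MonoidHom.inl G H) (fun _ => rfl) m n hx,
      mapsTo_setDD_of_leftInverse (MonoidHom.snd G H) (MonoidHom.inr G H) (fun _ => rfl) m n hx⟩

/-- `D_{m,n}(G × H) ⊆ D_{m,n}(G) × D_{m,n}(H)`. -/
theorem stmt2 (G H : Type*) [Group G] [Group H] [Finite G] [Finite H]
    (m n : ℕ) (hm : 0 < m) (hn : 0 < n) (hcop : Nat.Coprime m n) :
    setDD (G × H) m n ⊆ (setDD G m n) ×ˢ (setDD H m n) :=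
  stmt2_general G H m n
end

section
/- Let G be a finite group and m a positive integer. Then D_m(G) is a subgroup of G: it contains 1, is closed under inverses, and is closed under products. -/
/-!
Everything follows from `o(g) ∣ m ↔ g^m = 1`. Left multiplication by an element of `D_m`
preserves `L_m`, which gives closure under products by associativity. For inverses, `x⁻¹y` is
the inverse of `y⁻¹x`, which is conjugate to `xy⁻¹`, so all three have the same order.
-/

theorem orderOf_mul_comm {K : Type*} [Group K] (a b : K) :
    orderOf (a * b) = orderOf (b * a) :=
  (SemiconjBy.orderOf_eq a (show a * (b * a) = (a * b) * a by rw [mul_assoc])).symm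

namespace setD

variable {K : Type*} [Group K] {m : ℕ} {x y : K}

theorem mul_pow_eq_one (hx : x ∈ setD K m) (hy : y ^ m = 1) : (x * y) ^ m = 1 :=
  orderOf_dvd_iff_pow_eq_one.mp (hx.2 y hy)

theorem one_mem : (1 : K) ∈ setD K m :=
  ⟨one_pow m, fun _ hy => by simpa using orderOf_dvd_of_pow_eq_one hy⟩

theorem inv_mem (hx : x ∈ setD K m) : x⁻¹ ∈ setD K m := by
  refine ⟨by rw [inv_pow, hx.1, inv_one], fun y hy => ?_⟩
  have horder : orderOf (x⁻¹ * y) = orderOf (x * y⁻¹) := by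
    rw [← orderOf_inv, mul_inv_rev, inv_inv, orderOf_mul_comm]
  rw [horder]
  exact hx.2 y⁻¹ (by rw [inv_pow, hy, inv_one])

theorem mul_mem (hx : x ∈ setD K m) (hy : y ∈ setD K m) : x * y ∈ setD K m := by
  refine ⟨mul_pow_eq_one hx hy.1, fun z hz => ?_⟩
  rw [mul_assoc]
  exact hx.2 (y * z) (mul_pow_eq_one hy hz)

end setD

theorem stmt6_general (G : Type*) [Group G] (m : ℕ) :
    (1 : G) ∈ setD G m ∧
    (∀ x ∈ setD G m, x⁻¹ ∈ setD G m) ∧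
    (∀ x ∈ setD G m, ∀ y ∈ setD G m, x * y ∈ setD G m) :=
  ⟨setD.one_mem, fun _ hx => setD.inv_mem hx, fun _ hx _ hy => setD.mul_mem hx hy⟩

/-- `D_m(G)` is a subgroup of `G`: it contains `1`, is closed under
inverses and closed under products. -/
theorem stmt6 (G : Type*) [Group G] [Finite G] (m : ℕ) (hm : 0 < m) :
    (1 : G) ∈ setD G m ∧
    (∀ x ∈ setD G m, x⁻¹ ∈ setD G m) ∧
    (∀ x ∈ setD G m, ∀ y ∈ setD G m, x * y ∈ setD G m) :=
  stmt6_general G m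
end

section
/- Let G be a finite group of order mn with gcd(m,n)=1, and let x ∈ G be a nontrivial element with x^n = 1. Then for every nontrivial y ∈ D_{m,n}(G), no nontrivial power of x centralizes y; equivalently, the subgroup D_{m,n}(G)⟨x⟩ is a Frobenius group with kernel D_{m,n}(G) (whenever D_{m,n}(G) ≠ 1 and x ∉ D_{m,n}(G)). -/
section

variable {G : Type*} [Group G] {m n : ℕ}

theorem Commute.eq_one_of_orderOf_mul_dvd {a b : G} (hab : Commute a b) (hcop : m.Coprime n)
    (ha : a ^ m = 1) (hb : b ^ n = 1) (hdvd : orderOf (a * b) ∣ n) : a = 1 := by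
  have ha_dvd : orderOf a ∣ m := orderOf_dvd_of_pow_eq_one ha
  have hb_dvd : orderOf b ∣ n := orderOf_dvd_of_pow_eq_one hb
  have hmul : orderOf (a * b) = orderOf a * orderOf b :=
    hab.orderOf_mul_eq_mul_orderOf_of_coprime
      ((hcop.coprime_dvd_left ha_dvd).coprime_dvd_right hb_dvd)
  have ha_dvd_n : orderOf a ∣ n := (Dvd.intro _ hmul.symm).trans hdvd
  exact orderOf_eq_one_iff.mp (Nat.eq_one_of_dvd_coprimes hcop ha_dvd ha_dvd_n)

theorem eq_one_of_mem_setDD_of_commute {y u : G} (hy : y ∈ setDD G m n) (hcop : m.Coprime n)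
    (hu : u ^ n = 1) (hu1 : u ≠ 1) (hyu : Commute y u) : y = 1 :=
  hyu.eq_one_of_orderOf_mul_dvd hcop hy.1 hu (hy.2 u hu hu1)

end

theorem stmt10_general (G : Type*) [Group G] (m n : ℕ)
    (hcop : Nat.Coprime m n)
    (x : G) (hxn : x ^ n = 1) :
    ∀ y ∈ setDD G m n, y ≠ 1 → ∀ i : ℕ, x ^ i ≠ 1 → ¬ Commute (x ^ i) y := by
  intro y hy hy1 i hxi hcomm
  have hxin : (x ^ i) ^ n = 1 := by rw [pow_right_comm, hxn, one_pow]
  exact hy1 (eq_one_of_mem_setDD_of_commute hy hcop hxin hxi hcomm.symm)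

/-- for a finite group `G` of order `mn` with `gcd(m,n) = 1` and a
nontrivial `x` with `x^n = 1`, no nontrivial power of `x` centralizes any
nontrivial element of `D_{m,n}(G)`; i.e. `D_{m,n}(G)⟨x⟩` is Frobenius with
kernel `D_{m,n}(G)`. -/
theorem stmt10 (G : Type*) [Group G] [Finite G] (m n : ℕ) (hm : 0 < m) (hn : 0 < n)
    (hcop : Nat.Coprime m n) (hcard : Nat.card G = m * n)
    (x : G) (hx1 : x ≠ 1) (hxn : x ^ n = 1) :
    ∀ y ∈ setDD G m n, y ≠ 1 → ∀ i : ℕ, x ^ i ≠ 1 → ¬ Commute (x ^ i) y :=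
  stmt10_general G m n hcop x hxn
end

section
/- Let G = K ⋊ H be a finite Frobenius group with kernel K and complement H, i.e., K is normal, K ∩ H = 1, G = KH, and C_G(h) ∩ K = 1 for all nontrivial h ∈ H. Then for every x ∈ K and every nontrivial y ∈ H, o(xy) = o(y). -/
/-!
If no nontrivial element of `K` commutes with `y`, then `k ↦ ⁅k, y⁆ = k y k⁻¹ y⁻¹` is injective
on `K`; as `K` is normal and finite it is a bijection of `K`. Writing `x = ⁅k, y⁆` gives
`x y = k y k⁻¹`, so `x y` is conjugate to `y` and has the same order.
-/

open scoped commutatorElement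

namespace Subgroup

variable {G : Type*} [Group G] (K : Subgroup G) {y : G}

theorem injOn_commutatorElement_left (hy : ∀ k ∈ K, Commute k y → k = 1) :
    Set.InjOn (fun k : G => ⁅k, y⁆) K := by
  intro k₁ hk₁ k₂ hk₂ h
  have hconj : k₁ * y * k₁⁻¹ = k₂ * y * k₂⁻¹ := by
    simpa only [commutatorElement_def, mul_left_inj] using h
  have hcomm : Commute (k₂⁻¹ * k₁) y := by
    calc k₂⁻¹ * k₁ * y = k₂⁻¹ * (k₁ * y * k₁⁻¹) * k₁ := by group
      _ = y * (k₂⁻¹ * k₁) := by rw [hconj]; group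
  exact (inv_mul_eq_one.mp (hy _ (K.mul_mem (K.inv_mem hk₂) hk₁) hcomm)).symm

theorem mapsTo_commutatorElement_left [K.Normal] (y : G) :
    Set.MapsTo (fun k : G => ⁅k, y⁆) K K := fun _ hk =>
  commutator_le_left K ⊤ (commutator_mem_commutator hk (mem_top y))

theorem surjOn_commutatorElement_left [Finite K] [K.Normal]
    (hy : ∀ k ∈ K, Commute k y → k = 1) : Set.SurjOn (fun k : G => ⁅k, y⁆) K K := by
  have hmaps := K.mapsTo_commutatorElement_left y
  have hinj := hmaps.restrict_inj.mpr (K.injOn_commutatorElement_left hy)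
  exact hmaps.restrict_surjective_iff.mp (Finite.surjective_of_injective hinj)

theorem isConj_mul_of_forall_commute_eq_one [Finite K] [K.Normal]
    (hy : ∀ k ∈ K, Commute k y → k = 1) {x : G} (hx : x ∈ K) : IsConj y (x * y) := by
  obtain ⟨k, -, rfl⟩ := K.surjOn_commutatorElement_left hy hx
  exact isConj_iff.mpr ⟨k, by simp only [commutatorElement_def, inv_mul_cancel_right]⟩

end Subgroup

theorem stmt12_general (G : Type*) [Group G] [Finite G] (K H : Subgroup G) [K.Normal]
    (hfrob : ∀ h ∈ H, h ≠ 1 → ∀ k ∈ K, Commute k h → k = 1) :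
    ∀ x ∈ K, ∀ y ∈ H, y ≠ 1 → orderOf (x * y) = orderOf y := by
  intro x hx y hy hy1
  obtain ⟨c, hc⟩ := K.isConj_mul_of_forall_commute_eq_one (hfrob y hy hy1) hx
  exact hc.orderOf_eq.symm

/-- in a finite Frobenius group `G = K ⋊ H` (kernel `K`, complement
`H`), `o(xy) = o(y)` for all `x ∈ K` and nontrivial `y ∈ H`. -/
theorem stmt12 (G : Type*) [Group G] [Finite G] (K H : Subgroup G) [K.Normal]
    (hKH : K ⊓ H = ⊥) (hKHtop : K ⊔ H = ⊤)
    (hfrob : ∀ h ∈ H, h ≠ 1 → ∀ k ∈ K, Commute k h → k = 1) :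
    ∀ x ∈ K, ∀ y ∈ H, y ≠ 1 → orderOf (x * y) = orderOf y :=
  stmt12_general G K H hfrob
end

section
/- Let G be a finite Frobenius group with kernel K of order m and complement H of order n (so |G| = mn, gcd(m,n) = 1). Then for every x ∈ L_m(G) and every nontrivial y ∈ L_n(G), every prime dividing o(xy) divides o(y). -/
/-!
An element of `K` has order dividing `m` and an element of `G ⧸ K ≅ H` has order dividing `n`,
so by coprimality `x ∈ K` and `y ∉ K`. Since `x * y ≡ y` modulo `K`, the power
`(x * y) ^ orderOf y` lies in `K`; it commutes with `x * y ∉ K`, and in a Frobenius group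
the only element of the kernel commuting with an element outside the kernel is `1`
(every element outside `K` is conjugate to a nontrivial element of `H`). Hence
`orderOf (x * y) ∣ orderOf y`.
-/

namespace Subgroup

variable {G : Type*} [Group G]

theorem mem_of_pow_eq_one_of_coprime_index (K : Subgroup G) [K.Normal] {m : ℕ}
    (hm : m.Coprime K.index) {x : G} (hx : x ^ m = 1) : x ∈ K := by
  rw [← QuotientGroup.eq_one_iff, ← orderOf_eq_one_iff]
  refine Nat.eq_one_of_dvd_coprimes hm (orderOf_dvd_of_pow_eq_one ?_)
    (K.index_eq_card ▸ _root_.orderOf_dvd_natCard _)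
  rw [← QuotientGroup.mk_pow, hx, QuotientGroup.mk_one]

theorem notMem_of_pow_eq_one_of_coprime_card (K : Subgroup G) {n : ℕ}
    (hn : (Nat.card K).Coprime n) {y : G} (hy : y ^ n = 1) (hy1 : y ≠ 1) : y ∉ K := fun hyK =>
  hy1 <| orderOf_eq_one_iff.mp <|
    Nat.eq_one_of_dvd_coprimes hn (K.orderOf_dvd_natCard hyK) (orderOf_dvd_of_pow_eq_one hy)

theorem pow_orderOf_mul_mem (K : Subgroup G) [K.Normal] {x : G} (hx : x ∈ K) (y : G) :
    (x * y) ^ orderOf y ∈ K := by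
  rw [← QuotientGroup.eq_one_iff, QuotientGroup.mk_pow, QuotientGroup.mk_mul,
    (QuotientGroup.eq_one_iff x).mpr hx, one_mul, ← QuotientGroup.mk_pow, pow_orderOf_eq_one,
    QuotientGroup.mk_one]

section Frobenius

variable {K H : Subgroup G} [K.Normal]

theorem fixedPointFree_conjNormal {h : G} (hh : ∀ k ∈ K, Commute k h → k = 1) :
    MonoidHom.FixedPointFree (MulAut.conjNormal h : MulAut K) := fun k hk =>
  Subtype.ext <| hh k k.2 <| by
    have hk' : h * k * h⁻¹ = k := by simpa using congrArg Subtype.val hk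
    exact eq_mul_inv_iff_mul_eq.mp hk'.symm

/-- The Frobenius condition makes `u ↦ u * (h * u⁻¹ * h⁻¹)` a bijection of `K`, so every
element of the coset `K * h` is a `K`-conjugate of `h`. -/
theorem exists_conj_eq_mul [Finite K] {h : G} (hh : ∀ k ∈ K, Commute k h → k = 1)
    {k : G} (hk : k ∈ K) : ∃ u ∈ K, k * h = u * h * u⁻¹ := by
  obtain ⟨u, hu⟩ := (fixedPointFree_conjNormal hh).commutatorMap_surjective ⟨k, hk⟩
  refine ⟨u, u.2, ?_⟩
  have hku : (u : G) / (h * u * h⁻¹) = k := by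
    simpa only [MonoidHom.commutatorMap_apply, coe_div, MulAut.conjNormal_apply]
      using congrArg Subtype.val hu
  rw [← hku]
  simp [div_eq_mul_inv, mul_assoc]

theorem eq_one_of_commute_of_notMem [Finite K] (hKHtop : K ⊔ H = ⊤)
    (hfrob : ∀ h ∈ H, h ≠ 1 → ∀ k ∈ K, Commute k h → k = 1)
    {w : G} (hw : w ∈ K) {v : G} (hv : v ∉ K) (hwv : Commute w v) : w = 1 := by
  obtain ⟨k, hk, h, hh, rfl⟩ : ∃ k ∈ K, ∃ h ∈ H, k * h = v :=
    Set.mem_mul.mp (by rw [← normal_mul, hKHtop]; trivial)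
  have hh1 : h ≠ 1 := by rintro rfl; exact hv (by simpa using hk)
  obtain ⟨u, huK, hu⟩ := exists_conj_eq_mul (hfrob h hh hh1) hk
  rw [hu] at hwv
  have hcomm : Commute (u⁻¹ * w * u) h := by
    rw [← Commute.conj_iff u]
    simpa [mul_assoc] using hwv
  have hconj := hfrob h hh hh1 _ (K.mul_mem (K.mul_mem (K.inv_mem huK) hw) huK) hcomm
  exact (conj_eq_one_iff (a := u⁻¹)).mp (by rwa [inv_inv])

end Frobenius

end Subgroup

open Subgroup in
/-- in a finite Frobenius group `G = K ⋊ H` with `|K| = m`,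
`|H| = n`, `gcd(m,n) = 1`, every prime dividing `o(xy)` divides `o(y)` whenever
`x^m = 1`, `y^n = 1` and `y ≠ 1`. -/
theorem stmt14 (G : Type*) [Group G] [Finite G] (m n : ℕ) (hcop : Nat.Coprime m n)
    (K H : Subgroup G) [K.Normal] (hK : Nat.card K = m) (hH : Nat.card H = n)
    (hKH : K ⊓ H = ⊥) (hKHtop : K ⊔ H = ⊤)
    (hfrob : ∀ h ∈ H, h ≠ 1 → ∀ k ∈ K, Commute k h → k = 1) :
    ∀ x y : G, x ^ m = 1 → y ^ n = 1 → y ≠ 1 →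
      ∀ p : ℕ, p.Prime → p ∣ orderOf (x * y) → p ∣ orderOf y := by
  intro x y hx hy hy1 p _ hpd
  have hcompl : IsComplement' H K :=
    isComplement'_of_disjoint_and_mul_eq_univ (disjoint_iff.mpr (inf_comm K H ▸ hKH))
      (by rw [← mul_normal, sup_comm, hKHtop, coe_top])
  have hxK : x ∈ K :=
    K.mem_of_pow_eq_one_of_coprime_index (hcompl.index_eq_card ▸ hH ▸ hcop) hx
  have hyK : y ∉ K := K.notMem_of_pow_eq_one_of_coprime_card (hK ▸ hcop) hy hy1
  have hxyK : x * y ∉ K := fun h => hyK ((K.mul_mem_cancel_left hxK).mp h)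
  have hone : (x * y) ^ orderOf y = 1 :=
    eq_one_of_commute_of_notMem hKHtop hfrob (K.pow_orderOf_mul_mem hxK y) hxyK
      ((Commute.refl _).pow_left _)
  exact hpd.trans (orderOf_dvd_of_pow_eq_one hone)
end

section
/- Let G be a finite group of order mn with gcd(m,n) = 1. Then D_{m,n}(G/D_{m,n}(G)) is the trivial subgroup. -/
section

variable {G : Type*} [Group G] {m n : ℕ}

lemma exists_mul_eq_of_pow_mul_eq_one (hcop : m.Coprime n) {y : G} (hy : y ^ (m * n) = 1) :
    ∃ a ∈ Subgroup.zpowers (y ^ n), ∃ b ∈ Subgroup.zpowers (y ^ m),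
      y = a * b ∧ a ^ m = 1 ∧ b ^ n = 1 := by
  have hbezout : (m : ℤ) * m.gcdA n + n * m.gcdB n = 1 := by
    have h := Nat.gcd_eq_gcd_ab m n
    rw [hcop] at h
    exact_mod_cast h.symm
  have hy' : y ^ ((m : ℤ) * n) = 1 := by exact_mod_cast hy
  refine ⟨(y ^ n) ^ m.gcdB n, ⟨_, rfl⟩, (y ^ m) ^ m.gcdA n, ⟨_, rfl⟩, ?_, ?_, ?_⟩ <;>
    simp only [← zpow_natCast, ← zpow_mul, ← zpow_add]
  · rw [add_comm, hbezout, zpow_one]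
  · rw [show (n : ℤ) * m.gcdB n * m = m * n * m.gcdB n by ring, zpow_mul, hy', one_zpow]
  · rw [show (m : ℤ) * m.gcdA n * n = m * n * m.gcdA n by ring, zpow_mul, hy', one_zpow]

lemma one_mem_setDD : (1 : G) ∈ setDD G m n :=
  ⟨one_pow m, fun _ hu _ => by simpa using orderOf_dvd_of_pow_eq_one hu⟩

lemma eq_one_of_mem_setDD_of_pow_eq_one (hcop : m.Coprime n) {g : G} (hg : g ∈ setDD G m n)
    (hgn : g ^ n = 1) : g = 1 :=
  (pow_eq_one_iff_of_coprime hcop).mp ⟨hg.1, hgn⟩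

lemma pow_eq_one_of_pow_mem_setDD (hcop : m.Coprime n) {y : G} (hy : y ^ (m * n) = 1)
    (hym : y ^ m ∈ setDD G m n) : y ^ m = 1 := by
  have hymm : y ^ (m * m) = 1 := by rw [pow_mul, hym.1]
  simpa [Nat.gcd_mul_left, hcop] using pow_gcd_eq_one.mpr ⟨hymm, hy⟩

lemma mem_or_orderOf_dvd_of_pow_mem (hcop : m.Coprime n) {N : Subgroup G}
    (hN : (N : Set G) = setDD G m n) {y : G} (hy : y ^ (m * n) = 1) (hyn : y ^ n ∈ N) :
    y ∈ N ∨ orderOf y ∣ n := by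
  obtain ⟨a, ha, b, -, rfl, -, hbn⟩ := exists_mul_eq_of_pow_mul_eq_one hcop hy
  have haN : a ∈ N := Subgroup.zpowers_le.mpr hyn ha
  by_cases hb : b = 1
  · simp [hb, haN]
  · rw [← SetLike.mem_coe, hN] at haN
    exact Or.inr (haN.2 b hbn hb)

lemma mem_of_mk_mem_setDD (hcop : m.Coprime n) (hexp : ∀ g : G, g ^ (m * n) = 1)
    {N : Subgroup G} [N.Normal] (hN : (N : Set G) = setDD G m n) {x : G}
    (hx : (x : G ⧸ N) ∈ setDD (G ⧸ N) m n) : x ∈ N := by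
  have hmem : ∀ g : G, g ∈ N ↔ g ∈ setDD G m n := fun g => by rw [← hN, SetLike.mem_coe]
  have hxm : x ^ m = 1 := by
    refine pow_eq_one_of_pow_mem_setDD hcop (hexp x) ((hmem _).mp ?_)
    rw [← QuotientGroup.eq_one_iff, QuotientGroup.mk_pow, hx.1]
  refine (hmem x).mpr ⟨hxm, fun u hun hu => ?_⟩
  have huN : (u : G ⧸ N) ≠ 1 := fun h => hu <|
    eq_one_of_mem_setDD_of_pow_eq_one hcop ((hmem u).mp ((QuotientGroup.eq_one_iff u).mp h)) hun
  have hxun : (x * u) ^ n ∈ N := by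
    rw [← QuotientGroup.eq_one_iff, QuotientGroup.mk_pow, QuotientGroup.mk_mul,
      ← orderOf_dvd_iff_pow_eq_one]
    exact hx.2 u (by rw [← QuotientGroup.mk_pow, hun, QuotientGroup.mk_one]) huN
  rcases mem_or_orderOf_dvd_of_pow_mem hcop hN (hexp _) hxun with hxu | hdvd
  · have hxn : x ^ n = 1 := by
      rw [← orderOf_dvd_iff_pow_eq_one]
      simpa using ((hmem _).mp hxu).2 u⁻¹ (by rw [inv_pow, hun, inv_one]) (inv_ne_one.mpr hu)
    have hx1 : x = 1 := (pow_eq_one_iff_of_coprime hcop).mp ⟨hxm, hxn⟩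
    simpa [hx1] using orderOf_dvd_of_pow_eq_one hun
  · exact hdvd

end

theorem stmt15_general (G : Type*) [Group G] (m n : ℕ)
    (hcop : Nat.Coprime m n) (hcard : Nat.card G = m * n)
    (N : Subgroup G) [N.Normal] (hN : (N : Set G) = setDD G m n) :
    setDD (G ⧸ N) m n = {1} := by
  have hexp : ∀ g : G, g ^ (m * n) = 1 := fun g => hcard ▸ pow_card_eq_one'
  refine Set.eq_singleton_iff_unique_mem.mpr ⟨one_mem_setDD, fun x hx => ?_⟩
  obtain ⟨x, rfl⟩ := QuotientGroup.mk_surjective x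
  exact (QuotientGroup.eq_one_iff x).mpr (mem_of_mk_mem_setDD hcop hexp hN hx)

/-- `D_{m,n}(G / D_{m,n}(G))` is trivial. Here `N` is the (normal)
subgroup of `G` whose underlying set is `D_{m,n}(G)`. -/
theorem stmt15 (G : Type*) [Group G] [Finite G] (m n : ℕ) (hm : 0 < m) (hn : 0 < n)
    (hcop : Nat.Coprime m n) (hcard : Nat.card G = m * n)
    (N : Subgroup G) [N.Normal] (hN : (N : Set G) = setDD G m n) :
    setDD (G ⧸ N) m n = {1} :=
  stmt15_general G m n hcop hcard N hN
end
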